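/- Let f₁,…,f_m, g : ℝⁿ → ℝ be Borel measurable, S ⊆ ℝⁿ, φ ∈ ℝᵐ, and let (S_i)_{i≥1} be a progressive cover of S. Define U_i = sup_{μ ∈ M(S_i,φ)} E_μ[g(X)] and L_i = inf_{μ ∈ M(S_i,φ)} E_μ[g(X)] (in the extended reals). Then sup_{μ ∈ M(S,φ)} E_μ[g(X)] = lim_{i→∞} U_i and inf_{μ ∈ M(S,φ)} E_μ[g(X)] = lim_{i→∞} L_i. The same holds replacing M(S_i,φ) by M_k(S_i,φ) and M(S,φ) by M_k(S,φ) for any fixed k. -/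

import Mathlib

open MeasureTheory Set Filter Topology
open scoped BigOperators ENNReal

noncomputable section

/-- The support of a measure: points all of whose open neighborhoods have
positive measure. -/
def msupport {E : Type*} [TopologicalSpace E] [MeasurableSpace E]
    (μ : Measure E) : Set E :=
  {x | ∀ U : Set E, IsOpen U → x ∈ U → μ U ≠ 0}

/-- `M(S,φ)`: Borel probability measures with support contained in `S`,
with `E[f i] = φ i` for all `i` and `E[g]` finite. -/
def MC (n m : ℕ) (f : (Fin n → ℝ) → Fin m → ℝ) (g : (Fin n → ℝ) → ℝ)
    (S : Set (Fin n → ℝ)) (φ : Fin m → ℝ) : Set (Measure (Fin n → ℝ)) :=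
  {μ | IsProbabilityMeasure μ ∧ msupport μ ⊆ S ∧
    (∀ i, Integrable (fun x => f x i) μ) ∧ (∀ i, ∫ x, f x i ∂μ = φ i) ∧
    Integrable g μ}

/-- `M_k(S,φ)`: members of `M(S,φ)` whose support has at most `k` points. -/
def MCk (n m : ℕ) (f : (Fin n → ℝ) → Fin m → ℝ) (g : (Fin n → ℝ) → ℝ)
    (S : Set (Fin n → ℝ)) (φ : Fin m → ℝ) (k : ℕ) : Set (Measure (Fin n → ℝ)) :=
  {μ | μ ∈ MC n m f g S φ ∧ (msupport μ).encard ≤ (k : ℕ∞)}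

/-- A progressive cover of `S`: a monotone sequence of subsets of `S`
covering `S`. -/
def ProgCover {E : Type*} (S : Set E) (T : ℕ → Set E) : Prop :=
  (∀ i j, i ≤ j → T i ⊆ T j) ∧ (∀ i, T i ⊆ S) ∧ ∀ x ∈ S, ∃ i, x ∈ T i

/-!
Richter's theorem replaces any measure in `M(S, φ)` by a finitely supported one with the same
moments and the same `E[g]`: in finite dimension the mean of an integrable vector-valued map
lies in the convex hull (not only its closure) of the values it takes on the support. A finite
support lies in some `S_i`, so the values of `E[g]` over `M(S_i, φ)` increase to all values over
`M(S, φ)`, and the suprema (infima) over the increasing sets converge monotonically. For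
`M_k` no discretisation is needed.
-/

section Separation

open Pointwise

variable {k V : Type*} [Ring k] [AddCommGroup V] [Module k V] {C : Set V} {D : Submodule k V}

lemma affineSpan_add_eq_top_of_isCompl (hC : C.Nonempty) (hD : IsCompl (vectorSpan k C) D) :
    affineSpan k (C + (D : Set V)) = ⊤ := by
  obtain ⟨c, hc⟩ := hC
  have hcD : c ∈ C + (D : Set V) := ⟨c, hc, 0, D.zero_mem, add_zero c⟩
  refine (AffineSubspace.direction_eq_top_iff_of_nonempty
    ⟨c, subset_affineSpan k _ hcD⟩).1 (eq_top_iff.2 ?_)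
  rw [← hD.sup_eq_top, direction_affineSpan]
  refine sup_le (vectorSpan_mono k fun y hy => ⟨y, hy, 0, D.zero_mem, add_zero y⟩) fun w hw => ?_
  simpa using vsub_mem_vectorSpan k (show c + w ∈ C + (D : Set V) from ⟨c, hc, w, hw, rfl⟩) hcD

lemma notMem_add_of_isCompl {p : V} (hp : p ∈ affineSpan k C) (hpC : p ∉ C)
    (hD : IsCompl (vectorSpan k C) D) : p ∉ C + (D : Set V) := by
  rintro ⟨c, hc, w, hw, rfl⟩
  have hwC : w ∈ vectorSpan k C := by
    simpa [direction_affineSpan] using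
      AffineSubspace.vsub_mem_direction hp (subset_affineSpan k C hc)
  obtain rfl : w = 0 := hD.disjoint.le_bot ⟨hwC, hw⟩
  exact hpC (by simpa using hc)

lemma exists_dual_le_and_lt_of_notMem {V : Type*} [NormedAddCommGroup V] [NormedSpace ℝ V]
    [FiniteDimensional ℝ V] {C : Set V} {p : V} (hC : Convex ℝ C) (hp : p ∈ affineSpan ℝ C)
    (hpC : p ∉ C) : ∃ a : StrongDual ℝ V, (∀ y ∈ C, a y ≤ a p) ∧ ∃ y ∈ C, a y < a p := by
  have hCne : C.Nonempty := (affineSpan_nonempty ℝ).1 ⟨p, hp⟩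
  obtain ⟨D, hD⟩ := (vectorSpan ℝ C).exists_isCompl
  -- Thickening `C` by a complement of its direction gives a convex body not containing `p`.
  set A := C + (D : Set V)
  have hA : Convex ℝ A := hC.add D.convex
  have hAint : (interior A).Nonempty :=
    hA.interior_nonempty_iff_affineSpan_eq_top.2 (affineSpan_add_eq_top_of_isCompl hCne hD)
  obtain ⟨a, ha⟩ := geometric_hahn_banach_open_point hA.interior isOpen_interior
    fun h => notMem_add_of_isCompl hp hpC hD (interior_subset h)
  have hle : ∀ y ∈ A, a y ≤ a p := by
    refine fun y hy => closure_minimal (fun z hz => (ha z hz).le)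
      (isClosed_Iic.preimage a.continuous) ?_
    rw [hA.closure_interior_eq_closure_of_nonempty_interior hAint]
    exact subset_closure hy
  refine ⟨a, fun y hy => hle y ⟨y, hy, 0, D.zero_mem, add_zero y⟩, ?_⟩
  obtain ⟨z, hz⟩ := hAint
  obtain ⟨c, hc, w, hw, rfl⟩ := interior_subset hz
  have h₁ := ha _ hz
  have h₂ := hle (c + -w) ⟨c, hc, -w, D.neg_mem hw, rfl⟩
  simp only [map_add, map_neg] at h₁ h₂
  exact ⟨c, hc, by linarith⟩

end Separation

open Module in
/-- If the integral were on the relative boundary of the convex hull, a supporting functional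
would be almost everywhere constant along `F`, confining `F` to a face of smaller dimension. -/
theorem integral_mem_convexHull_image {α V : Type*} [MeasurableSpace α] {μ : Measure α}
    [IsProbabilityMeasure μ] [NormedAddCommGroup V] [NormedSpace ℝ V] [FiniteDimensional ℝ V]
    {F : α → V} (hF : Integrable F μ) {X : Set α} (hX : ∀ᵐ x ∂μ, x ∈ X) :
    ∫ x, F x ∂μ ∈ convexHull ℝ (F '' X) := by
  induction h : finrank ℝ (vectorSpan ℝ (F '' X)) using Nat.strong_induction_on generalizing X
    with | _ d ih =>
  set p := ∫ x, F x ∂μ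
  have hFX : ∀ᵐ x ∂μ, F x ∈ convexHull ℝ (F '' X) :=
    hX.mono fun x hx => subset_convexHull ℝ _ ⟨x, hx, rfl⟩
  have hp_span : p ∈ affineSpan ℝ (convexHull ℝ (F '' X)) :=
    closure_minimal (subset_affineSpan ℝ _) (AffineSubspace.closed_of_finiteDimensional _)
      ((convex_convexHull ℝ _).closure.integral_mem isClosed_closure
        (hFX.mono fun x hx => subset_closure hx) hF)
  by_contra hpC
  obtain ⟨a, hle, y, hyC, hy⟩ :=
    exists_dual_le_and_lt_of_notMem (convex_convexHull ℝ _) hp_span hpC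
  have hlevel : ∀ᵐ x ∂μ, a (F x) = a p :=
    (integral_eq_iff_of_ae_le (a.integrable_comp hF) (integrable_const (a p))
      (hFX.mono fun x hx => hle _ hx)).1 (by simp [p, a.integral_comp_comm hF])
  set X' := {x ∈ X | a (F x) = a p}
  have hX' : ∀ᵐ x ∂μ, x ∈ X' := hX.and hlevel
  have hX'X : F '' X' ⊆ F '' X := image_mono (sep_subset _ _)
  have hspan_lt : vectorSpan ℝ (F '' X') < vectorSpan ℝ (F '' X) := by
    refine lt_of_le_of_ne (vectorSpan_mono ℝ hX'X) fun heq => hy.ne ?_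
    have hlevel_span :
        affineSpan ℝ (F '' X') ≤ AffineSubspace.mk' p (LinearMap.ker (a : V →ₗ[ℝ] ℝ)) :=
      affineSpan_le.2 fun _ ⟨x, hx, hFx⟩ => by
        simpa [← hFx, AffineSubspace.mem_mk', sub_eq_zero] using hx.2
    have hspan_eq : affineSpan ℝ (F '' X') = affineSpan ℝ (F '' X) :=
      AffineSubspace.eq_of_direction_eq_of_nonempty_of_le
        (by simpa only [direction_affineSpan] using heq)
        ((affineSpan_nonempty ℝ).2 (Nonempty.image F hX'.exists))
        (affineSpan_mono ℝ hX'X)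
    have hyA : y ∈ affineSpan ℝ (F '' X') := by
      rw [hspan_eq, ← affineSpan_convexHull]
      exact subset_affineSpan ℝ _ hyC
    simpa [AffineSubspace.mem_mk', sub_eq_zero] using hlevel_span hyA
  exact hpC (convexHull_mono hX'X
    (ih _ (h ▸ Submodule.finrank_lt_finrank_of_lt hspan_lt) hX' rfl))

section DiracCombination

variable {α ι : Type*} [MeasurableSpace α] [Fintype ι] (w : ι → ℝ) (x : ι → α)

def diracCombination : Measure α := ∑ i, ENNReal.ofReal (w i) • Measure.dirac (x i)

variable {w}

lemma isProbabilityMeasure_diracCombination (hw₀ : ∀ i, 0 ≤ w i) (hw₁ : ∑ i, w i = 1) :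
    IsProbabilityMeasure (diracCombination w x) := by
  constructor
  simp [diracCombination, ← ENNReal.ofReal_sum_of_nonneg fun i _ => hw₀ i, hw₁]

variable [MeasurableSingletonClass α] {E : Type*} [NormedAddCommGroup E]

lemma integrable_diracCombination (h : α → E) : Integrable h (diracCombination w x) :=
  integrable_finsetSum_measure.2 fun _ _ =>
    (integrable_dirac enorm_lt_top).smul_measure ENNReal.ofReal_ne_top

lemma integral_diracCombination [NormedSpace ℝ E] [CompleteSpace E] (hw₀ : ∀ i, 0 ≤ w i)
    (h : α → E) :
    ∫ y, h y ∂diracCombination w x = ∑ i, w i • h (x i) := by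
  rw [diracCombination, integral_finsetSum_measure fun _ _ =>
    (integrable_dirac enorm_lt_top).smul_measure ENNReal.ofReal_ne_top]
  simp [integral_smul_measure, integral_dirac, ENNReal.toReal_ofReal (hw₀ _)]

lemma support_diracCombination_subset [TopologicalSpace α] [T1Space α] :
    (diracCombination w x).support ⊆ range x := by
  refine Measure.support_subset_of_isClosed (finite_range x).isClosed (mem_ae_iff.2 ?_)
  simp [diracCombination, Measure.dirac_apply]

end DiracCombination

/-- Richter's (Tchakaloff's) theorem. -/
theorem exists_finite_support_integral_eq {α V : Type*} [TopologicalSpace α] [MeasurableSpace α]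
    [HereditarilyLindelofSpace α] [T1Space α] [MeasurableSingletonClass α]
    [NormedAddCommGroup V] [NormedSpace ℝ V] [FiniteDimensional ℝ V]
    (μ : Measure α) [IsProbabilityMeasure μ] {F : α → V} (hF : Integrable F μ) :
    ∃ ν : Measure α, IsProbabilityMeasure ν ∧ ν.support ⊆ μ.support ∧ ν.support.Finite ∧
      Integrable F ν ∧ ∫ x, F x ∂ν = ∫ x, F x ∂μ := by
  obtain ⟨ι, _, w, z, hw₀, hw₁, hz, hsum⟩ := mem_convexHull_iff_exists_fintype.1
    (integral_mem_convexHull_image hF Measure.support_mem_ae)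
  choose x hx hFx using hz
  have hν := support_diracCombination_subset (w := w) x
  refine ⟨diracCombination w x, isProbabilityMeasure_diracCombination x hw₀ hw₁,
    hν.trans (range_subset_iff.2 hx), (finite_range x).subset hν,
    integrable_diracCombination x F, ?_⟩
  rw [integral_diracCombination x hw₀, ← hsum]
  simp only [hFx]

theorem tendsto_biSup_of_forall_exists_eq {α β : Type*} [CompleteLinearOrder β]
    [TopologicalSpace β] [OrderTopology β] {G : α → β} {M : ℕ → Set α} {M' : Set α}
    (hM : Monotone M) (hsub : ∀ i, M i ⊆ M') (hcover : ∀ μ ∈ M', ∃ i, ∃ ν ∈ M i, G ν = G μ) :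
    Tendsto (fun i => ⨆ μ ∈ M i, G μ) atTop (𝓝 (⨆ μ ∈ M', G μ)) := by
  have hmono : Monotone fun i => ⨆ μ ∈ M i, G μ := fun i j hij => biSup_mono fun μ hμ => hM hij hμ
  convert tendsto_atTop_iSup hmono using 2
  refine le_antisymm (iSup₂_le fun μ hμ => ?_) (iSup_le fun i => biSup_mono (hsub i))
  obtain ⟨i, ν, hν, hνμ⟩ := hcover μ hμ
  exact hνμ ▸ le_iSup_of_le i (le_biSup G hν)

theorem tendsto_biInf_of_forall_exists_eq {α β : Type*} [CompleteLinearOrder β]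
    [TopologicalSpace β] [OrderTopology β] {G : α → β} {M : ℕ → Set α} {M' : Set α}
    (hM : Monotone M) (hsub : ∀ i, M i ⊆ M') (hcover : ∀ μ ∈ M', ∃ i, ∃ ν ∈ M i, G ν = G μ) :
    Tendsto (fun i => ⨅ μ ∈ M i, G μ) atTop (𝓝 (⨅ μ ∈ M', G μ)) :=
  tendsto_biSup_of_forall_exists_eq (β := βᵒᵈ) hM hsub hcover

namespace ProgCover

variable {E : Type*} {S : Set E} {T : ℕ → Set E}

lemma monotone (hT : ProgCover S T) : Monotone T := fun i j => hT.1 i j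

lemma exists_subset_of_finite (hT : ProgCover S T) {P : Set E} (hP : P.Finite)
    (hPS : P ⊆ S) : ∃ N, P ⊆ T N := by
  simpa [subset_def] using hT.monotone.directed_le.exists_mem_subset_of_finset_subset_biUnion
    (s := hP.toFinset) (by rw [hP.coe_toFinset]; exact fun x hx => mem_iUnion.2 (hT.2.2 x (hPS hx)))

end ProgCover

lemma msupport_eq_support {α : Type*} [TopologicalSpace α] [MeasurableSpace α]
    (μ : Measure α) : msupport μ = μ.support := by
  ext x
  simp only [msupport, Measure.support_eq_forall_isOpen, pos_iff_ne_zero, mem_ofPred_eq]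
  exact forall_congr' fun _ => imp.swap

section Moments

variable {n m : ℕ} {f : (Fin n → ℝ) → Fin m → ℝ} {g : (Fin n → ℝ) → ℝ} {φ : Fin m → ℝ}

lemma MC_mono {S S' : Set (Fin n → ℝ)} (h : S ⊆ S') : MC n m f g S φ ⊆ MC n m f g S' φ :=
  fun _ hμ => ⟨hμ.1, hμ.2.1.trans h, hμ.2.2⟩

lemma MCk_mono {S S' : Set (Fin n → ℝ)} (h : S ⊆ S') {k : ℕ} :
    MCk n m f g S φ k ⊆ MCk n m f g S' φ k :=
  fun _ hμ => ⟨MC_mono h hμ.1, hμ.2⟩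

lemma exists_mem_MC_finite_msupport {S : Set (Fin n → ℝ)} {μ : Measure (Fin n → ℝ)}
    (hμ : μ ∈ MC n m f g S φ) :
    ∃ ν ∈ MC n m f g S φ, (msupport ν).Finite ∧ ∫ x, g x ∂ν = ∫ x, g x ∂μ := by
  obtain ⟨hprob, hsupp, hf, hfφ, hg⟩ := hμ
  obtain ⟨ν, hνprob, hνsupp, hνfin, hνint, hνeq⟩ :=
    exists_finite_support_integral_eq μ ((Integrable.of_eval hf).prodMk hg)
  rw [integral_pair hνint.fst hνint.snd, integral_pair (Integrable.of_eval hf) hg,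
    Prod.mk.injEq] at hνeq
  rw [msupport_eq_support] at hsupp
  refine ⟨ν, ⟨hνprob, by rw [msupport_eq_support]; exact hνsupp.trans hsupp, hνint.fst.eval,
    fun i => ?_, hνint.snd⟩, by rwa [msupport_eq_support], hνeq.2⟩
  rw [← hfφ i, ← eval_integral hνint.fst.eval, hνeq.1, eval_integral hf]

lemma ProgCover.exists_mem_MC_of_finite {S : Set (Fin n → ℝ)} {T : ℕ → Set (Fin n → ℝ)}
    (hT : ProgCover S T) {μ : Measure (Fin n → ℝ)} (hμ : μ ∈ MC n m f g S φ)
    (hfin : (msupport μ).Finite) : ∃ i, μ ∈ MC n m f g (T i) φ :=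
  (hT.exists_subset_of_finite hfin hμ.2.1).imp fun _ hi => ⟨hμ.1, hi, hμ.2.2⟩

end Moments

theorem progressive_cover_limits_general {n m : ℕ}
    (f : (Fin n → ℝ) → Fin m → ℝ) (g : (Fin n → ℝ) → ℝ)
    (S : Set (Fin n → ℝ)) (φ : Fin m → ℝ)
    (T : ℕ → Set (Fin n → ℝ)) (hT : ProgCover S T) :
    Tendsto (fun i => ⨆ μ ∈ MC n m f g (T i) φ, ((∫ x, g x ∂μ : ℝ) : EReal))
      atTop (𝓝 (⨆ μ ∈ MC n m f g S φ, ((∫ x, g x ∂μ : ℝ) : EReal))) ∧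
    Tendsto (fun i => ⨅ μ ∈ MC n m f g (T i) φ, ((∫ x, g x ∂μ : ℝ) : EReal))
      atTop (𝓝 (⨅ μ ∈ MC n m f g S φ, ((∫ x, g x ∂μ : ℝ) : EReal))) ∧
    (∀ k : ℕ,
      Tendsto (fun i => ⨆ μ ∈ MCk n m f g (T i) φ k, ((∫ x, g x ∂μ : ℝ) : EReal))
        atTop (𝓝 (⨆ μ ∈ MCk n m f g S φ k, ((∫ x, g x ∂μ : ℝ) : EReal))) ∧
      Tendsto (fun i => ⨅ μ ∈ MCk n m f g (T i) φ k, ((∫ x, g x ∂μ : ℝ) : EReal))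
        atTop (𝓝 (⨅ μ ∈ MCk n m f g S φ k, ((∫ x, g x ∂μ : ℝ) : EReal)))) := by
  have hMC_mono : Monotone fun i => MC n m f g (T i) φ := fun i j hij => MC_mono (hT.monotone hij)
  have hMCk_mono (k : ℕ) : Monotone fun i => MCk n m f g (T i) φ k :=
    fun i j hij => MCk_mono (hT.monotone hij)
  have hMC_cover : ∀ μ ∈ MC n m f g S φ, ∃ i, ∃ ν ∈ MC n m f g (T i) φ,
      ((∫ x, g x ∂ν : ℝ) : EReal) = ((∫ x, g x ∂μ : ℝ) : EReal) := by
    intro μ hμ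
    obtain ⟨ν, hν, hfin, hint⟩ := exists_mem_MC_finite_msupport hμ
    obtain ⟨i, hi⟩ := hT.exists_mem_MC_of_finite hν hfin
    exact ⟨i, ν, hi, congrArg _ hint⟩
  have hMCk_cover (k : ℕ) : ∀ μ ∈ MCk n m f g S φ k, ∃ i, ∃ ν ∈ MCk n m f g (T i) φ k,
      ((∫ x, g x ∂ν : ℝ) : EReal) = ((∫ x, g x ∂μ : ℝ) : EReal) := by
    intro μ hμ
    obtain ⟨i, hi⟩ := hT.exists_mem_MC_of_finite hμ.1 (finite_of_encard_le_coe hμ.2)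
    exact ⟨i, μ, ⟨hi, hμ.2⟩, rfl⟩
  refine ⟨tendsto_biSup_of_forall_exists_eq hMC_mono (fun i => MC_mono (hT.2.1 i)) hMC_cover,
    tendsto_biInf_of_forall_exists_eq hMC_mono (fun i => MC_mono (hT.2.1 i)) hMC_cover,
    fun k => ⟨?_, ?_⟩⟩
  · exact tendsto_biSup_of_forall_exists_eq (hMCk_mono k) (fun i => MCk_mono (hT.2.1 i))
      (hMCk_cover k)
  · exact tendsto_biInf_of_forall_exists_eq (hMCk_mono k) (fun i => MCk_mono (hT.2.1 i))
      (hMCk_cover k)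

/-- the extrema of `E[g]` over a set covered by a progressive
cover are the limits of the extrema over the elements of the cover. -/
theorem progressive_cover_limits {n m : ℕ}
    (f : (Fin n → ℝ) → Fin m → ℝ) (g : (Fin n → ℝ) → ℝ)
    (hf : ∀ i, Measurable fun x => f x i) (hg : Measurable g)
    (S : Set (Fin n → ℝ)) (φ : Fin m → ℝ)
    (T : ℕ → Set (Fin n → ℝ)) (hT : ProgCover S T) :
    Tendsto (fun i => ⨆ μ ∈ MC n m f g (T i) φ, ((∫ x, g x ∂μ : ℝ) : EReal))
      atTop (𝓝 (⨆ μ ∈ MC n m f g S φ, ((∫ x, g x ∂μ : ℝ) : EReal))) ∧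
    Tendsto (fun i => ⨅ μ ∈ MC n m f g (T i) φ, ((∫ x, g x ∂μ : ℝ) : EReal))
      atTop (𝓝 (⨅ μ ∈ MC n m f g S φ, ((∫ x, g x ∂μ : ℝ) : EReal))) ∧
    (∀ k : ℕ,
      Tendsto (fun i => ⨆ μ ∈ MCk n m f g (T i) φ k, ((∫ x, g x ∂μ : ℝ) : EReal))
        atTop (𝓝 (⨆ μ ∈ MCk n m f g S φ k, ((∫ x, g x ∂μ : ℝ) : EReal))) ∧
      Tendsto (fun i => ⨅ μ ∈ MCk n m f g (T i) φ k, ((∫ x, g x ∂μ : ℝ) : EReal))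
        atTop (𝓝 (⨅ μ ∈ MCk n m f g S φ k, ((∫ x, g x ∂μ : ℝ) : EReal)))) :=
  progressive_cover_limits_general f g S φ T hT
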